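/- Every well-typed term of the simply typed lambda calculus is strongly normalizing under beta-reduction; in particular every such term has a unique beta-normal form. -/

import Mathlib

/- Simply typed λ-calculus: atomic base types and arrow types. -/
inductive Ty : Type where
  | base : Nat → Ty
  | arr : Ty → Ty → Ty

/- Terms: typed constants, (de Bruijn) variables, application, typed abstraction. -/
inductive Tm : Type where
  | const : Nat → Tm
  | var : Nat → Tm
  | app : Tm → Tm → Tm
  | lam : Ty → Tm → Tm

def liftTm (d : Nat) : Tm → Tm
  | .const c => .const c
  | .var k => if k < d then .var k else .var (k+1)
  | .app m n => .app (liftTm d m) (liftTm d n)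
  | .lam τ m => .lam τ (liftTm (d+1) m)

/- Capture-avoiding substitution for de Bruijn variable d. -/
def substTm (d : Nat) (s : Tm) : Tm → Tm
  | .const c => .const c
  | .var k => if k = d then s else if d < k then .var (k-1) else .var k
  | .app m n => .app (substTm d s m) (substTm d s n)
  | .lam τ m => .lam τ (substTm (d+1) (liftTm 0 s) m)

/- β-reduction: compatible closure of (λx.M) N → M[N/x]. -/
inductive Step : Tm → Tm → Prop where
  | beta : Step (.app (.lam τ m) n) (substTm 0 n m)
  | app1 : Step m m' → Step (.app m n) (.app m' n)
  | app2 : Step n n' → Step (.app m n) (.app m n')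
  | lam : Step m m' → Step (.lam τ m) (.lam τ m')

/- Typing relative to a signature cs for constants and a context Γ. -/
inductive HasType (cs : Nat → Ty) : List Ty → Tm → Ty → Prop where
  | const : HasType cs Γ (.const c) (cs c)
  | var : Γ[k]? = some τ → HasType cs Γ (.var k) τ
  | app : HasType cs Γ m (.arr τ σ) → HasType cs Γ n τ →
      HasType cs Γ (.app m n) σ
  | lam : HasType cs (τ :: Γ) m σ → HasType cs Γ (.lam τ m) (.arr τ σ)

/-!
Tait's reducibility method. Reducibility at base type is strong normalization, and at `A → B` it is
strong normalization together with mapping reducible arguments to reducible results. Reducible terms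
are strongly normalizing, reducibility is closed under reduction, and a neutral term is reducible as
soon as all its one-step reducts are; with these, every well-typed term with reducible terms
substituted for its free variables is reducible. Variables are reducible, so every well-typed term
is strongly normalizing. β-reduction is locally confluent, so by Newman's lemma it is confluent on
strongly normalizing terms, whose normal forms are therefore unique.
-/

open Relation

section AbstractRewriting

variable {α : Type*} {r : α → α → Prop}

theorem Acc.exists_normalForm {a : α} (ha : Acc (fun x y => r y x) a) :
    ∃ n, ReflTransGen r a n ∧ ∀ u, ¬ r n u := by
  induction ha with
  | intro a _ ih =>
    by_cases h : ∃ u, r a u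
    · obtain ⟨u, hu⟩ := h
      obtain ⟨n, hun, hn⟩ := ih u hu
      exact ⟨n, ReflTransGen.head hu hun, hn⟩
    · exact ⟨a, ReflTransGen.refl, fun u hu => h ⟨u, hu⟩⟩

/-- Newman's lemma, localized to the accessible part. -/
theorem Acc.join_of_locallyConfluent
    (hlc : ∀ a b c, r a b → r a c → Join (ReflTransGen r) b c) {a : α}
    (ha : Acc (fun x y => r y x) a) {b c : α} (hab : ReflTransGen r a b)
    (hac : ReflTransGen r a c) : Join (ReflTransGen r) b c := by
  induction ha generalizing b c with
  | intro a _ ih =>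
    rcases hab.cases_head with rfl | ⟨b₁, hab₁, hb₁b⟩
    · exact ⟨c, hac, ReflTransGen.refl⟩
    rcases hac.cases_head with rfl | ⟨c₁, hac₁, hc₁c⟩
    · exact ⟨b, ReflTransGen.refl, ReflTransGen.head hab₁ hb₁b⟩
    obtain ⟨d, hb₁d, hc₁d⟩ := hlc a b₁ c₁ hab₁ hac₁
    obtain ⟨e, hbe, hde⟩ := ih b₁ hab₁ hb₁b hb₁d
    obtain ⟨f, hef, hcf⟩ := ih c₁ hac₁ (hc₁d.trans hde) hc₁c
    exact ⟨f, hbe.trans hef, hcf⟩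

theorem Acc.existsUnique_normalForm
    (hlc : ∀ a b c, r a b → r a c → Join (ReflTransGen r) b c) {a : α}
    (ha : Acc (fun x y => r y x) a) :
    ∃! n, ReflTransGen r a n ∧ ∀ u, ¬ r n u := by
  obtain ⟨n, han, hn⟩ := ha.exists_normalForm
  refine ⟨n, ⟨han, hn⟩, fun n' ⟨han', hn'⟩ => ?_⟩
  obtain ⟨d, hn'd, hnd⟩ := ha.join_of_locallyConfluent hlc han' han
  exact ((reflTransGen_iff_eq hn').1 hn'd).symm.trans ((reflTransGen_iff_eq hn).1 hnd)

end AbstractRewriting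

namespace Tm

def upRen (ρ : ℕ → ℕ) : ℕ → ℕ
  | 0 => 0
  | k + 1 => ρ k + 1

def rename (ρ : ℕ → ℕ) : Tm → Tm
  | const c => const c
  | var k => var (ρ k)
  | app m n => app (m.rename ρ) (n.rename ρ)
  | lam τ m => lam τ (m.rename (upRen ρ))

/-- Lifting a simultaneous substitution under a binder. -/
def up (σ : ℕ → Tm) : ℕ → Tm
  | 0 => var 0
  | k + 1 => (σ k).rename Nat.succ

def subst (σ : ℕ → Tm) : Tm → Tm
  | const c => const c
  | var k => σ k
  | app m n => app (m.subst σ) (n.subst σ)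
  | lam τ m => lam τ (m.subst (up σ))

def scons (u : Tm) (σ : ℕ → Tm) : ℕ → Tm
  | 0 => u
  | k + 1 => σ k

/-- The simultaneous substitution performed by `substTm d s`. -/
def substAt (d : ℕ) (s : Tm) (k : ℕ) : Tm :=
  if k = d then s else if d < k then var (k - 1) else var k

theorem rename_rename (t : Tm) (ρ ρ' : ℕ → ℕ) :
    (t.rename ρ').rename ρ = t.rename (ρ ∘ ρ') := by
  induction t generalizing ρ ρ' with
  | const c => rfl
  | var k => rfl
  | app m n ihm ihn => simp only [rename, ihm, ihn]
  | lam τ m ih =>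
    simp only [rename, ih]
    congr 2
    funext k; cases k <;> rfl

theorem subst_rename (t : Tm) (σ : ℕ → Tm) (ρ : ℕ → ℕ) :
    (t.rename ρ).subst σ = t.subst (σ ∘ ρ) := by
  induction t generalizing σ ρ with
  | const c => rfl
  | var k => rfl
  | app m n ihm ihn => simp only [rename, subst, ihm, ihn]
  | lam τ m ih =>
    simp only [rename, subst, ih]
    congr 2
    funext k; cases k <;> rfl

theorem rename_subst (t : Tm) (ρ : ℕ → ℕ) (σ : ℕ → Tm) :
    (t.subst σ).rename ρ = t.subst (fun k => (σ k).rename ρ) := by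
  induction t generalizing ρ σ with
  | const c => rfl
  | var k => rfl
  | app m n ihm ihn => simp only [rename, subst, ihm, ihn]
  | lam τ m ih =>
    simp only [rename, subst, ih]
    congr 2
    funext k
    cases k with
    | zero => rfl
    | succ k => simp only [up, rename_rename]; rfl

theorem subst_subst (t : Tm) (σ τ : ℕ → Tm) :
    (t.subst τ).subst σ = t.subst (fun k => (τ k).subst σ) := by
  induction t generalizing σ τ with
  | const c => rfl
  | var k => rfl
  | app m n ihm ihn => simp only [subst, ihm, ihn]
  | lam τ m ih =>
    simp only [subst, ih]
    congr 2
    funext k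
    cases k with
    | zero => rfl
    | succ k => simp only [up, subst_rename, rename_subst]; rfl

theorem subst_var (t : Tm) : t.subst var = t := by
  induction t with
  | const c => rfl
  | var k => rfl
  | app m n ihm ihn => simp only [subst, ihm, ihn]
  | lam τ m ih =>
    have hup : up var = var := by funext k; cases k <;> rfl
    simp only [subst, hup, ih]

theorem rename_eq_subst (t : Tm) (ρ : ℕ → ℕ) : t.rename ρ = t.subst (var ∘ ρ) := by
  induction t generalizing ρ with
  | const c => rfl
  | var k => rfl
  | app m n ihm ihn => simp only [rename, subst, ihm, ihn]
  | lam τ m ih =>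
    have hup : up (var ∘ ρ) = var ∘ upRen ρ := by funext k; cases k <;> rfl
    simp only [rename, subst, ih, hup]

theorem liftTm_eq_rename (t : Tm) (d : ℕ) :
    liftTm d t = t.rename (fun k => if k < d then k else k + 1) := by
  induction t generalizing d with
  | const c => rfl
  | var k => simp only [liftTm, rename]; split <;> rfl
  | app m n ihm ihn => simp only [liftTm, rename, ihm, ihn]
  | lam τ m ih =>
    simp only [liftTm, rename, ih]
    congr 2
    funext k
    cases k with
    | zero => simp [upRen]
    | succ k => simp only [upRen]; split <;> split <;> omega

theorem substTm_eq_subst (t : Tm) (d : ℕ) (s : Tm) : substTm d s t = t.subst (substAt d s) := by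
  induction t generalizing d s with
  | const c => rfl
  | var k => rfl
  | app m n ihm ihn => simp only [substTm, subst, ihm, ihn]
  | lam τ m ih =>
    simp only [substTm, subst, ih]
    congr 2
    funext k
    cases k with
    | zero => simp [substAt, up]
    | succ k =>
      simp only [substAt, up, liftTm_eq_rename]
      rcases Nat.lt_trichotomy k d with h | rfl | h
      · simp [rename, h.ne, h.not_gt]
      · simp
      · simp [rename, h, h.ne']
        omega

theorem substAt_zero (s : Tm) : substAt 0 s = scons s var := by
  funext k; cases k <;> simp [substAt, scons]

theorem substTm_zero_eq_subst (t s : Tm) : substTm 0 s t = t.subst (scons s var) := by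
  rw [substTm_eq_subst, substAt_zero]

theorem substTm_zero_subst_up (m u : Tm) (σ : ℕ → Tm) :
    substTm 0 u (m.subst (up σ)) = m.subst (scons u σ) := by
  rw [substTm_zero_eq_subst, subst_subst]
  congr 1
  funext k
  cases k with
  | zero => rfl
  | succ k => simp only [up, subst_rename]; exact subst_var (σ k)

theorem subst_substTm_zero (m n : Tm) (σ : ℕ → Tm) :
    (substTm 0 n m).subst σ = substTm 0 (n.subst σ) (m.subst (up σ)) := by
  rw [substTm_zero_subst_up, substTm_zero_eq_subst, subst_subst]
  congr 1
  funext k; cases k <;> rfl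

end Tm

open Tm

theorem Step.subst {m m' : Tm} (h : Step m m') (σ : ℕ → Tm) : Step (m.subst σ) (m'.subst σ) := by
  induction h generalizing σ with
  | beta => rw [subst_substTm_zero]; exact Step.beta
  | app1 _ ih => exact Step.app1 (ih σ)
  | app2 _ ih => exact Step.app2 (ih σ)
  | lam _ ih => exact Step.lam (ih (up σ))

theorem Step.substTm_zero {m m' : Tm} (h : Step m m') (s : Tm) :
    Step (substTm 0 s m) (substTm 0 s m') := by
  simpa only [substTm_zero_eq_subst] using h.subst _

theorem Step.lam_inv {τ : Ty} {m x : Tm} (h : Step (.lam τ m) x) :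
    ∃ m', x = .lam τ m' ∧ Step m m' := by
  cases h with
  | lam h' => exact ⟨_, rfl, h'⟩

theorem reflTransGen_step_app {m m' n n' : Tm} (hm : ReflTransGen Step m m')
    (hn : ReflTransGen Step n n') : ReflTransGen Step (.app m n) (.app m' n') :=
  (hm.lift (fun x => Tm.app x n) fun _ _ => Step.app1).trans
    (hn.lift (Tm.app m') fun _ _ => Step.app2)

theorem reflTransGen_step_lam {τ : Ty} {m m' : Tm} (h : ReflTransGen Step m m') :
    ReflTransGen Step (.lam τ m) (.lam τ m') :=
  h.lift (Tm.lam τ) fun _ _ => Step.lam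

theorem reflTransGen_step_subst {σ σ' : ℕ → Tm} (h : ∀ k, ReflTransGen Step (σ k) (σ' k))
    (m : Tm) : ReflTransGen Step (m.subst σ) (m.subst σ') := by
  induction m generalizing σ σ' with
  | const c => exact ReflTransGen.refl
  | var k => exact h k
  | app a b iha ihb => exact reflTransGen_step_app (iha h) (ihb h)
  | lam τ a ih =>
    refine reflTransGen_step_lam (ih fun k => ?_)
    cases k with
    | zero => exact ReflTransGen.refl
    | succ k =>
      simp only [up, rename_eq_subst]
      exact (h k).lift _ fun _ _ hst => hst.subst _

theorem reflTransGen_step_substTm_zero {s s' : Tm} (h : Step s s') (m : Tm) :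
    ReflTransGen Step (substTm 0 s m) (substTm 0 s' m) := by
  simp only [substTm_zero_eq_subst]
  refine reflTransGen_step_subst (fun k => ?_) m
  cases k with
  | zero => exact ReflTransGen.single h
  | succ k => exact ReflTransGen.refl

theorem Step.locallyConfluent (a b c : Tm) (hab : Step a b) (hac : Step a c) :
    Join (ReflTransGen Step) b c := by
  induction hab generalizing c with
  | @beta τ m n =>
    cases hac with
    | beta => exact ⟨_, ReflTransGen.refl, ReflTransGen.refl⟩
    | app1 h =>
      obtain ⟨m', rfl, hm⟩ := h.lam_inv
      exact ⟨substTm 0 n m', .single (hm.substTm_zero n), .single Step.beta⟩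
    | app2 h => exact ⟨_, reflTransGen_step_substTm_zero h m, .single Step.beta⟩
  | @app1 m m' n h ih =>
    cases hac with
    | beta =>
      obtain ⟨m₀', rfl, hm⟩ := h.lam_inv
      exact ⟨substTm 0 n m₀', .single Step.beta, .single (hm.substTm_zero n)⟩
    | app1 h' =>
      obtain ⟨d, hd, hd'⟩ := ih _ h'
      exact ⟨.app d n, reflTransGen_step_app hd .refl, reflTransGen_step_app hd' .refl⟩
    | app2 h' => exact ⟨.app m' _, .single (Step.app2 h'), .single (Step.app1 h)⟩
  | @app2 n n' m h ih =>
    cases hac with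
    | beta => exact ⟨_, .single Step.beta, reflTransGen_step_substTm_zero h _⟩
    | app1 h' => exact ⟨.app _ n', .single (Step.app1 h'), .single (Step.app2 h)⟩
    | app2 h' =>
      obtain ⟨d, hd, hd'⟩ := ih _ h'
      exact ⟨.app m d, reflTransGen_step_app .refl hd, reflTransGen_step_app .refl hd'⟩
  | @lam m m' τ h ih =>
    obtain ⟨m'', rfl, hm⟩ := hac.lam_inv
    obtain ⟨d, hd, hd'⟩ := ih _ hm
    exact ⟨.lam τ d, reflTransGen_step_lam hd, reflTransGen_step_lam hd'⟩

abbrev SN (t : Tm) : Prop := Acc (fun a b => Step b a) t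

theorem SN.lam {m : Tm} (h : SN m) (τ : Ty) : SN (.lam τ m) :=
  h.of_fibration (Tm.lam τ) fun _ _ hst => by
    obtain ⟨m', rfl, hm⟩ := Step.lam_inv hst
    exact ⟨m', hm, rfl⟩

theorem SN.of_map {f : Tm → Tm} (hf : ∀ x y, Step x y → Step (f x) (f y)) {m : Tm}
    (h : SN (f m)) : SN m :=
  Subrelation.accessible (fun hst => hf _ _ hst) (InvImage.accessible f h)

def Neutral (t : Tm) : Prop := ∀ τ m, t ≠ .lam τ m

def Reducible : Ty → Tm → Prop
  | .base _, t => SN t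
  | .arr A B, t => SN t ∧ ∀ u, Reducible A u → Reducible B (.app t u)

namespace Reducible

theorem sn {A : Ty} {t : Tm} (h : Reducible A t) : SN t := by
  cases A with
  | base => exact h
  | arr => exact h.1

theorem step {A : Ty} {t t' : Tm} (h : Reducible A t) (hst : Step t t') : Reducible A t' := by
  induction A generalizing t t' with
  | base => exact h.inv hst
  | arr A B _ ihB => exact ⟨h.1.inv hst, fun u hu => ihB (h.2 u hu) (Step.app1 hst)⟩

theorem of_neutral {A : Ty} {t : Tm} (hne : Neutral t)
    (h : ∀ t', Step t t' → Reducible A t') : Reducible A t := by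
  induction A generalizing t with
  | base => exact Acc.intro t h
  | arr A B _ ihB =>
    refine ⟨Acc.intro t fun t' hst => (h t' hst).sn, fun u hu => ?_⟩
    induction hu.sn with
    | intro u _ ihu =>
      refine ihB (fun _ _ => Tm.noConfusion) fun v hv => ?_
      cases hv with
      | beta => exact absurd rfl (hne _ _)
      | app1 hst => exact (h _ hst).2 u hu
      | app2 hst => exact ihu _ hst (hu.step hst)

theorem of_normal_neutral {A : Ty} {t : Tm} (hne : Neutral t) (hnf : ∀ t', ¬ Step t t') :
    Reducible A t :=
  of_neutral hne fun t' hst => absurd hst (hnf t')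

theorem var (A : Ty) (k : ℕ) : Reducible A (.var k) :=
  of_normal_neutral (fun _ _ => Tm.noConfusion) fun _ h => nomatch h

theorem const (A : Ty) (c : ℕ) : Reducible A (.const c) :=
  of_normal_neutral (fun _ _ => Tm.noConfusion) fun _ h => nomatch h

theorem app_lam {τ σ : Ty} {b u : Tm} (hb : SN b) (hu : SN u)
    (hbody : ∀ u', Reducible τ u' → Reducible σ (substTm 0 u' b)) (hru : Reducible τ u) :
    Reducible σ (.app (.lam τ b) u) := by
  induction hb generalizing u with
  | intro b _ ihb =>
    induction hu with
    | intro u hu' ihu =>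
      refine of_neutral (fun _ _ => Tm.noConfusion) fun v hv => ?_
      cases hv with
      | beta => exact hbody u hru
      | app1 h =>
        obtain ⟨b', rfl, hbb'⟩ := h.lam_inv
        exact ihb _ hbb' (Acc.intro u hu')
          (fun u' hu'' => (hbody u' hu'').step (hbb'.substTm_zero u')) hru
      | app2 h => exact ihu _ h (hru.step h)

end Reducible

def ReducibleSubst (Γ : List Ty) (σ : ℕ → Tm) : Prop :=
  ∀ k τ, Γ[k]? = some τ → Reducible τ (σ k)

theorem ReducibleSubst.scons {Γ : List Ty} {σ : ℕ → Tm} {τ : Ty} {u : Tm}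
    (hσ : ReducibleSubst Γ σ) (hu : Reducible τ u) : ReducibleSubst (τ :: Γ) (scons u σ) := by
  rintro (_ | k) τ' hk
  · cases hk
    exact hu
  · exact hσ k τ' hk

theorem reducibleSubst_var (Γ : List Ty) : ReducibleSubst Γ Tm.var :=
  fun k τ _ => Reducible.var τ k

/-- The fundamental lemma of reducibility. -/
theorem HasType.reducible_subst {cs : ℕ → Ty} {Γ : List Ty} {t : Tm} {A : Ty}
    (h : HasType cs Γ t A) {σ : ℕ → Tm} (hσ : ReducibleSubst Γ σ) : Reducible A (t.subst σ) := by
  induction h generalizing σ with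
  | const => exact Reducible.const _ _
  | var hk => exact hσ _ _ hk
  | app _ _ ihm ihn => exact (ihm hσ).2 _ (ihn hσ)
  | @lam τ _ m B _ ih =>
    have hbody : ∀ u, Reducible τ u → Reducible B (substTm 0 u (m.subst (up σ))) := by
      intro u hu
      rw [substTm_zero_subst_up]
      exact ih (hσ.scons hu)
    -- `substTm 0 (var 0)` maps steps to steps, so the body inherits SN from this instance of it
    have hsn : SN (m.subst (up σ)) :=
      SN.of_map (fun _ _ hst => hst.substTm_zero (.var 0)) (hbody _ (Reducible.var τ 0)).sn
    exact ⟨hsn.lam τ, fun u hu => Reducible.app_lam hsn hu.sn hbody hu⟩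

/-- Every well-typed STLC term is strongly normalizing under β-reduction, and
    has a unique β-normal form. -/
theorem stlc_strong_normalization_and_unique_normal_form
    (cs : Nat → Ty) (Γ : List Ty) (t : Tm) (A : Ty)
    (h : HasType cs Γ t A) :
    Acc (fun a b => Step b a) t ∧
    ∃! n, Relation.ReflTransGen Step t n ∧ ∀ u, ¬ Step n u := by
  have hred : Reducible A t := by
    simpa only [subst_var] using h.reducible_subst (reducibleSubst_var Γ)
  exact ⟨hred.sn, hred.sn.existsUnique_normalForm Step.locallyConfluent⟩
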